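/- Let K ≥ 2, let α ∈ ℝ^K satisfy α_k > 1 for every k, set α₀ = ∑_{k=1}^K α_k, and let y ∈ {0,1}^K be a one-hot vector (∑_{k=1}^K y_k = 1). Define p̃* ∈ ℝ^K by p̃*_k = (α_k − y_k)/(α₀ − 1). Then for every p ∈ ℝ^K with p_k > 0 for all k and ∑_{k=1}^K p_k = 1, one has α₀·log α₀ + ∑_{k=1}^K α_k·log(p_k/α_k) − ∑_{k=1}^K y_k·log p_k ≤ α₀·log α₀ + ∑_{k=1}^K α_k·log(p̃*_k/α_k) − ∑_{k=1}^K y_k·log p̃*_k; that is, p̃* maximizes the objective log g(p) + ℓ(p,y) over the interior of the probability simplex. -/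

import Mathlib

/-!
Up to the constant `α₀ log α₀ - ∑ α_k log α_k`, the objective is `∑ (α_k - y_k) log p_k`, a sum
with positive weights `c_k = α_k - y_k` of total mass `α₀ - 1`. Gibbs' inequality, i.e. summing
`c log (x / c) ≤ x - c` at `x = (α₀ - 1) p_k`, shows that such a sum is maximized on the simplex
at `p_k = c_k / (α₀ - 1)`.
-/

open Real Finset

theorem mul_log_div_le_sub {c x : ℝ} (hc : 0 ≤ c) (hx : 0 < x) : c * log (x / c) ≤ x - c := by
  rcases hc.eq_or_lt with rfl | hc
  · simpa using hx.le
  calc c * log (x / c) ≤ c * (x / c - 1) :=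
        mul_le_mul_of_nonneg_left (log_le_sub_one_of_pos (div_pos hx hc)) hc.le
    _ = x - c := by field_simp

theorem sum_mul_log_le_sum_mul_log_div_sum {ι : Type*} [Fintype ι] {c p : ι → ℝ}
    (hc : ∀ i, 0 ≤ c i) (hp : ∀ i, 0 < p i) (hp1 : ∑ i, p i = 1) :
    ∑ i, c i * log (p i) ≤ ∑ i, c i * log (c i / ∑ j, c j) := by
  set C := ∑ j, c j
  rcases (sum_nonneg fun i _ => hc i).eq_or_lt with hC | hC
  · have hc0 : c = 0 := (Fintype.sum_eq_zero_iff_of_nonneg hc).mp hC.symm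
    simp [hc0]
  have hdiff : ∀ i, c i * log (p i) - c i * log (c i / C) = c i * log (C * p i / c i) := by
    intro i
    rcases (hc i).eq_or_lt with h | h
    · simp [← h]
    rw [log_div (mul_pos hC (hp i)).ne' h.ne', log_mul hC.ne' (hp i).ne', log_div h.ne' hC.ne']
    ring
  rw [← sub_nonpos, ← sum_sub_distrib]
  calc ∑ i, (c i * log (p i) - c i * log (c i / C))
      = ∑ i, c i * log (C * p i / c i) := sum_congr rfl fun i _ => hdiff i
    _ ≤ ∑ i, (C * p i - c i) :=
        sum_le_sum fun i _ => mul_log_div_le_sub (hc i) (mul_pos hC (hp i))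
    _ = 0 := by rw [sum_sub_distrib, ← mul_sum, hp1, mul_one, sub_self]

theorem sum_mul_log_div_sub_sum_mul_log {ι : Type*} [Fintype ι] {α q : ι → ℝ} (y : ι → ℝ)
    (hα : ∀ i, α i ≠ 0) (hq : ∀ i, q i ≠ 0) :
    ∑ i, α i * log (q i / α i) - ∑ i, y i * log (q i)
      = ∑ i, (α i - y i) * log (q i) - ∑ i, α i * log (α i) := by
  simp only [← sum_sub_distrib]
  exact sum_congr rfl fun i _ => by rw [log_div (hq i) (hα i)]; ring

theorem dappr_prop1_maximizer_general
    (K : ℕ) (α y : Fin K → ℝ)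
    (hα : ∀ k, 1 < α k)
    (hy01 : ∀ k, y k = 0 ∨ y k = 1) (hysum : ∑ k, y k = 1)
    (p : Fin K → ℝ) (hp : ∀ k, 0 < p k) (hpsum : ∑ k, p k = 1) :
    (∑ k, α k) * Real.log (∑ k, α k)
        + ∑ k, α k * Real.log (p k / α k)
        - ∑ k, y k * Real.log (p k)
      ≤ (∑ k, α k) * Real.log (∑ k, α k)
        + ∑ k, α k * Real.log ((α k - y k) / ((∑ j, α j) - 1) / α k)
        - ∑ k, y k * Real.log ((α k - y k) / ((∑ j, α j) - 1)) := by
  have hα0 : ∀ k, α k ≠ 0 := fun k => (one_pos.trans (hα k)).ne'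
  have hc : ∀ k, 0 < α k - y k := fun k => by
    rcases hy01 k with h | h <;> linarith [hα k, h]
  have hcsum : ∑ k, (α k - y k) = ∑ j, α j - 1 := by rw [sum_sub_distrib, hysum]
  have hmax : ∀ k, (α k - y k) / (∑ j, α j - 1) ≠ 0 := fun k => by
    rw [← hcsum]
    exact (div_pos (hc k) ((hc k).trans_le
      (single_le_sum (fun j _ => (hc j).le) (mem_univ k)))).ne'
  have gibbs := sum_mul_log_le_sum_mul_log_div_sum (fun k => (hc k).le) hp hpsum
  rw [hcsum] at gibbs
  linarith [sum_mul_log_div_sub_sum_mul_log y hα0 fun k => (hp k).ne',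
    sum_mul_log_div_sub_sum_mul_log y hα0 hmax]

/-- Proposition 1 (closed-form maximizer): for Dirichlet parameters `α` with
`α k > 1` and a one-hot label `y`, the point `p̃* k = (α k - y k) / (α₀ - 1)`
maximizes `log g(p) + ℓ(p, y)` over the interior of the probability simplex. -/
theorem dappr_prop1_maximizer
    (K : ℕ) (hK : 2 ≤ K) (α y : Fin K → ℝ)
    (hα : ∀ k, 1 < α k)
    (hy01 : ∀ k, y k = 0 ∨ y k = 1) (hysum : ∑ k, y k = 1)
    (p : Fin K → ℝ) (hp : ∀ k, 0 < p k) (hpsum : ∑ k, p k = 1) :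
    (∑ k, α k) * Real.log (∑ k, α k)
        + ∑ k, α k * Real.log (p k / α k)
        - ∑ k, y k * Real.log (p k)
      ≤ (∑ k, α k) * Real.log (∑ k, α k)
        + ∑ k, α k * Real.log ((α k - y k) / ((∑ j, α j) - 1) / α k)
        - ∑ k, y k * Real.log ((α k - y k) / ((∑ j, α j) - 1)) :=
  dappr_prop1_maximizer_general K α y hα hy01 hysum p hp hpsum
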